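/- arXiv:1804.07936 — 4 statements merged into one kernel-verified Lean document; each statement's English description precedes it below -/
import Mathlib

section
/- Let α, β ∈ ℂ with Re(α) ≥ 0 and Re(β) > −1, and set n = ⌊Re(α)⌋ + 1. Then for every real t > 0, the n-th derivative at t of the function g(t) = (1/Γ(n−α)) · ∫_0^t (t−u)^{n−α−1} · u^β du equals (Γ(β+1)/Γ(β−α+1)) · t^{β−α}. -/
/-!
By the Beta integral, the fractional integral of order `n - α` of `u ^ β` is
`Γ(β+1)/Γ(β+n-α+1) · t ^ (β+n-α)` on `t > 0`. Differentiating `n` times produces the falling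
factorial of `β+n-α` of length `n`, which is the Gamma ratio `Γ(β+n-α+1)/Γ(β-α+1)`.
-/

open Complex MeasureTheory intervalIntegral

namespace Complex

/-- At a pole `z + 1 - n` of `Γ` both sides vanish, the right one through `x / 0 = 0`. -/
theorem descPochhammer_eval_eq_Gamma_div {z : ℂ} (hz : Gamma (z + 1) ≠ 0) (n : ℕ) :
    (descPochhammer ℂ n).eval z = Gamma (z + 1) / Gamma (z + 1 - n) := by
  induction n with
  | zero => simp [hz]
  | succ n ih =>
    rw [descPochhammer_succ_eval, ih, Nat.cast_succ, add_sub_add_right_eq_sub]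
    rcases eq_or_ne (z - n) 0 with h | h
    · simp [h]
    · rw [show z + 1 - n = z - n + 1 by ring, Gamma_add_one _ h, mul_comm (z - n), ← div_div,
        div_mul_cancel₀ _ h]

end Complex

theorem iteratedDeriv_ofReal_cpow_const {x : ℝ} (hx : 0 < x) (r : ℂ) (k : ℕ) :
    iteratedDeriv k (fun y : ℝ => (y : ℂ) ^ r) x =
      (descPochhammer ℂ k).eval r * (x : ℂ) ^ (r - k) := by
  induction k generalizing x with
  | zero => simp
  | succ k ih =>
    have hderiv : HasDerivAt (fun y : ℝ => (descPochhammer ℂ k).eval r * (y : ℂ) ^ (r - k))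
        ((descPochhammer ℂ k).eval r * ((r - k) * (x : ℂ) ^ (r - k - 1))) x := by
      simpa using (((hasDerivAt_id (x : ℂ)).cpow_const (c := r - k)
        (ofReal_mem_slitPlane.2 hx)).comp_ofReal).const_mul ((descPochhammer ℂ k).eval r)
    have hev : iteratedDeriv k (fun y : ℝ => (y : ℂ) ^ r) =ᶠ[nhds x]
        fun y : ℝ => (descPochhammer ℂ k).eval r * (y : ℂ) ^ (r - k) := by
      filter_upwards [eventually_gt_nhds hx] with y hy using ih hy
    rw [iteratedDeriv_succ, hev.deriv_eq, hderiv.deriv, descPochhammer_succ_eval, Nat.cast_succ,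
      ← sub_sub]
    ring

noncomputable def riemannLiouvilleIntegral (a : ℂ) (f : ℝ → ℂ) (t : ℝ) : ℂ :=
  (1 / Gamma a) * ∫ u in (0 : ℝ)..t, ((t - u : ℝ) : ℂ) ^ (a - 1) * f u

theorem riemannLiouvilleIntegral_cpow {a b : ℂ} (ha : 0 < a.re) (hb : -1 < b.re) {t : ℝ}
    (ht : 0 < t) :
    riemannLiouvilleIntegral a (fun u => (u : ℂ) ^ b) t =
      Gamma (b + 1) / Gamma (b + a + 1) * (t : ℂ) ^ (b + a) := by
  have hb1 : 0 < (b + 1).re := by simp only [add_re, one_re]; linarith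
  have hΓa : Gamma a ≠ 0 := Gamma_ne_zero_of_re_pos ha
  have hΓ : Gamma (b + a + 1) ≠ 0 :=
    Gamma_ne_zero_of_re_pos (by simp only [add_re, one_re]; linarith)
  have hbeta : betaIntegral (b + 1) a = Gamma (b + 1) * Gamma a / Gamma (b + a + 1) := by
    rw [eq_div_iff hΓ, Gamma_mul_Gamma_eq_betaIntegral hb1 ha, add_right_comm, mul_comm]
  have hint : ∫ u in (0 : ℝ)..t, ((t - u : ℝ) : ℂ) ^ (a - 1) * (u : ℂ) ^ b =
      ∫ u in (0 : ℝ)..t, (u : ℂ) ^ (b + 1 - 1) * ((t : ℂ) - u) ^ (a - 1) := by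
    refine integral_congr fun u _ => ?_
    push_cast
    ring_nf
  rw [riemannLiouvilleIntegral, hint, betaIntegral_scaled _ _ ht, hbeta,
    show b + 1 + a - 1 = b + a by ring]
  field_simp

theorem lerch_stmt1_general (α β : ℂ) (hβ : -1 < β.re)
    (n : ℕ) (hn : (n : ℤ) = ⌊α.re⌋ + 1) :
    ∀ t : ℝ, 0 < t →
      iteratedDeriv n
          (fun t' : ℝ => (1 / Complex.Gamma ((n : ℂ) - α)) *
            ∫ u in (0:ℝ)..t', ((t' - u : ℝ) : ℂ) ^ ((n : ℂ) - α - 1) * (u : ℂ) ^ β) t =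
        (Complex.Gamma (β + 1) / Complex.Gamma (β - α + 1)) * (t : ℂ) ^ (β - α) := by
  intro t ht
  have hαn : α.re < n := by
    have : (n : ℝ) = ⌊α.re⌋ + 1 := by exact_mod_cast hn
    linarith [Int.lt_floor_add_one α.re]
  have hs : 0 < ((n : ℂ) - α).re := by simpa using hαn
  have hΓ : Gamma (β + (n - α) + 1) ≠ 0 :=
    Gamma_ne_zero_of_re_pos (by simp only [add_re, sub_re, natCast_re, one_re]; linarith)
  have hclosed : Set.EqOn (riemannLiouvilleIntegral (n - α) fun u => (u : ℂ) ^ β)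
      (fun x => Gamma (β + 1) / Gamma (β + (n - α) + 1) * (x : ℂ) ^ (β + (n - α)))
      (Set.Ioi 0) := fun x hx => riemannLiouvilleIntegral_cpow hs hβ hx
  change iteratedDeriv n (riemannLiouvilleIntegral (n - α) fun u => (u : ℂ) ^ β) t = _
  rw [hclosed.iteratedDeriv_of_isOpen isOpen_Ioi n ht, iteratedDeriv_const_mul_field,
    iteratedDeriv_ofReal_cpow_const ht, descPochhammer_eval_eq_Gamma_div hΓ,
    show β + (n - α) + 1 - n = β - α + 1 by ring, show β + (n - α) - n = β - α by ring,
    ← mul_assoc, div_mul_div_cancel₀ hΓ]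

/-- The Riemann–Liouville fractional derivative (order `α`, `Re α ≥ 0`, constant of
differintegration `0`) of the power function `t ^ β`: with `n = ⌊Re α⌋ + 1`, the `n`-th
derivative of the fractional integral of order `n − α` of `u ^ β` at `t > 0` equals
`Γ(β+1)/Γ(β−α+1) · t^(β−α)`. -/
theorem lerch_stmt1 (α β : ℂ) (hα : 0 ≤ α.re) (hβ : -1 < β.re)
    (n : ℕ) (hn : (n : ℤ) = ⌊α.re⌋ + 1) :
    ∀ t : ℝ, 0 < t →
      iteratedDeriv n
          (fun t' : ℝ => (1 / Complex.Gamma ((n : ℂ) - α)) *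
            ∫ u in (0:ℝ)..t', ((t' - u : ℝ) : ℂ) ^ ((n : ℂ) - α - 1) * (u : ℂ) ^ β) t =
        (Complex.Gamma (β + 1) / Complex.Gamma (β - α + 1)) * (t : ℂ) ^ (β - α) :=
  lerch_stmt1_general α β hβ n hn
end

section
/- Let α, k, t ∈ ℂ with Re(α) < 0 and Re(k) > 0. Then the function r ↦ r^{−α−1} · e^{k(t−r)} is integrable on (0, ∞), and (1/Γ(−α)) · ∫_0^∞ r^{−α−1} · e^{k(t−r)} dr = k^α · e^{kt}, where k^α is the principal branch (argument of k in (−π, π)). -/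
/-!
For real `k = r > 0` the substitution `x ↦ r x` in Euler's integral gives
`∫₀^∞ x^(s-1) e^(-r x) dx = r^(-s) Γ(s)`. Both sides are holomorphic in `k` on the right
half-plane (the left side by differentiation under the integral sign, dominated by
`x^(Re s) e^(-(Re k / 2) x)` near `k`), so the identity theorem extends the formula to all
`k` with `Re k > 0`. Pulling out the factor `e^(k t)` and taking `s = -α` gives the theorem.
-/

open Complex MeasureTheory Set Filter Topology

lemma Real.integrableOn_rpow_mul_exp_neg_mul {s b : ℝ} (hs : -1 < s) (hb : 0 < b) :
    IntegrableOn (fun x : ℝ => x ^ s * Real.exp (-(b * x))) (Ioi 0) := by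
  simpa using integrableOn_rpow_mul_exp_neg_mul_rpow hs one_pos hb

namespace Complex

lemma norm_cpow_mul_exp_neg_mul (a k : ℂ) {x : ℝ} (hx : 0 < x) :
    ‖(x : ℂ) ^ a * exp (-(k * x))‖ = x ^ a.re * Real.exp (-(k.re * x)) := by
  rw [norm_mul, norm_exp, norm_cpow_eq_rpow_re_of_pos hx, neg_re, re_mul_ofReal]

lemma continuousOn_cpow_mul_exp_neg_mul (a k : ℂ) :
    ContinuousOn (fun x : ℝ => (x : ℂ) ^ a * exp (-(k * x))) (Ioi 0) :=
  (continuous_ofReal.continuousOn.cpow_const fun _ hx => ofReal_mem_slitPlane.2 hx).mul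
    (by fun_prop)

lemma integrableOn_cpow_mul_exp_neg_mul {a k : ℂ} (ha : -1 < a.re) (hk : 0 < k.re) :
    IntegrableOn (fun x : ℝ => (x : ℂ) ^ a * exp (-(k * x))) (Ioi 0) := by
  refine (Real.integrableOn_rpow_mul_exp_neg_mul ha hk).mono'
    ((continuousOn_cpow_mul_exp_neg_mul a k).aestronglyMeasurable measurableSet_Ioi) ?_
  filter_upwards [ae_restrict_mem measurableSet_Ioi] with x hx
  rw [norm_cpow_mul_exp_neg_mul a k hx]

lemma hasDerivAt_cpow_mul_exp_neg_mul (a k : ℂ) {x : ℝ} (hx : 0 < x) :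
    HasDerivAt (fun k : ℂ => (x : ℂ) ^ a * exp (-(k * x)))
      (-((x : ℂ) ^ (a + 1) * exp (-(k * x)))) k := by
  have hexp : HasDerivAt (fun k : ℂ => exp (-(k * x))) (exp (-(k * x)) * -x) k := by
    simpa using ((hasDerivAt_id k).mul_const (x : ℂ)).neg.cexp
  refine (hexp.const_mul ((x : ℂ) ^ a)).congr_deriv ?_
  rw [cpow_add _ _ (ofReal_ne_zero.2 hx.ne'), cpow_one]
  ring

lemma hasDerivAt_integral_cpow_mul_exp_neg_mul {a k : ℂ} (ha : -1 < a.re) (hk : 0 < k.re) :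
    HasDerivAt (fun k : ℂ => ∫ x in Ioi (0 : ℝ), (x : ℂ) ^ a * exp (-(k * x)))
      (∫ x in Ioi (0 : ℝ), -((x : ℂ) ^ (a + 1) * exp (-(k * x)))) k := by
  have hk2 : 0 < k.re / 2 := half_pos hk
  have hnhds : {z : ℂ | k.re / 2 < z.re} ∈ 𝓝 k :=
    (isOpen_lt continuous_const continuous_re).mem_nhds (by simp; linarith)
  refine (hasDerivAt_integral_of_dominated_loc_of_deriv_le
    (F' := fun k x => -((x : ℂ) ^ (a + 1) * exp (-(k * x))))
    (bound := fun x : ℝ => x ^ (a + 1).re * Real.exp (-(k.re / 2 * x))) hnhds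
    (.of_forall fun k' => (continuousOn_cpow_mul_exp_neg_mul a k').aestronglyMeasurable
      measurableSet_Ioi)
    (integrableOn_cpow_mul_exp_neg_mul ha hk)
    ((continuousOn_cpow_mul_exp_neg_mul (a + 1) k).neg.aestronglyMeasurable measurableSet_Ioi)
    ?_ ?_ ?_).2
  · filter_upwards [ae_restrict_mem measurableSet_Ioi] with x (hx : 0 < x) k' (hk' : _ < _)
    rw [norm_neg, norm_cpow_mul_exp_neg_mul _ _ hx]
    gcongr
  · exact Real.integrableOn_rpow_mul_exp_neg_mul (by simp; linarith) hk2
  · filter_upwards [ae_restrict_mem measurableSet_Ioi] with x hx k' _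
    exact hasDerivAt_cpow_mul_exp_neg_mul a k' hx

lemma integral_cpow_mul_exp_neg_ofReal_mul_Ioi {s : ℂ} (hs : 0 < s.re) {r : ℝ} (hr : 0 < r) :
    ∫ x in Ioi (0 : ℝ), (x : ℂ) ^ (s - 1) * exp (-(r * x)) = (r : ℂ) ^ (-s) * Gamma s := by
  rw [integral_cpow_mul_exp_neg_mul_Ioi hs hr, one_div,
    inv_cpow _ _ (by rw [arg_ofReal_of_nonneg hr.le]; exact Real.pi_ne_zero.symm), cpow_neg]

lemma integral_cpow_mul_exp_neg_mul_Ioi_of_re_pos {s k : ℂ} (hs : 0 < s.re) (hk : 0 < k.re) :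
    ∫ x in Ioi (0 : ℝ), (x : ℂ) ^ (s - 1) * exp (-(k * x)) = k ^ (-s) * Gamma s := by
  let U : Set ℂ := {z | 0 < z.re}
  have hU : IsOpen U := isOpen_lt continuous_const continuous_re
  have hlhs : AnalyticOnNhd ℂ
      (fun k : ℂ => ∫ x in Ioi (0 : ℝ), (x : ℂ) ^ (s - 1) * exp (-(k * x))) U :=
    DifferentiableOn.analyticOnNhd (fun z hz =>
      (hasDerivAt_integral_cpow_mul_exp_neg_mul (by simp; linarith) hz).differentiableAt
        |>.differentiableWithinAt) hU
  have hrhs : AnalyticOnNhd ℂ (fun k : ℂ => k ^ (-s) * Gamma s) U :=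
    DifferentiableOn.analyticOnNhd (fun z hz =>
      ((differentiableAt_id.cpow_const (Or.inl hz)).mul_const _).differentiableWithinAt) hU
  have hreal : Tendsto (fun r : ℝ => (r : ℂ)) (𝓝[>] 1) (𝓝[≠] 1) :=
    tendsto_nhdsWithin_iff.2 ⟨(continuous_ofReal.tendsto' 1 1 ofReal_one).mono_left
      nhdsWithin_le_nhds,
      eventually_nhdsWithin_of_forall fun r hr => by simpa using (hr : 1 < r).ne'⟩
  refine hlhs.eqOn_of_preconnected_of_frequently_eq hrhs
    (convex_halfSpace_re_gt 0).isPreconnected (show (0 : ℝ) < (1 : ℂ).re by simp) ?_ hk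
  exact hreal.frequently (eventually_nhdsWithin_of_forall (s := Ioi 1) fun r (hr : 1 < r) =>
    integral_cpow_mul_exp_neg_ofReal_mul_Ioi hs (by linarith)).frequently

end Complex

/-- The Riemann–Liouville fractional integral (order `α`, `Re α < 0`, constant of
differintegration `−∞`, along the horizontal leftward ray from `t`) of the exponential
function `e^{kt}` (with `Re k > 0`) is `k^α e^{kt}` (principal branch). -/
theorem lerch_stmt2 (α k t : ℂ) (hα : α.re < 0) (hk : 0 < k.re) :
    IntegrableOn (fun r : ℝ => (r : ℂ) ^ (-α - 1) * Complex.exp (k * (t - r))) (Set.Ioi 0) ∧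
    (1 / Complex.Gamma (-α)) *
        ∫ r in Set.Ioi (0:ℝ), (r : ℂ) ^ (-α - 1) * Complex.exp (k * (t - r)) =
      k ^ α * Complex.exp (k * t) := by
  have hs : 0 < (-α).re := by simpa using hα
  have hsplit : (fun r : ℝ => (r : ℂ) ^ (-α - 1) * exp (k * (t - r))) =
      fun r : ℝ => exp (k * t) * ((r : ℂ) ^ (-α - 1) * exp (-(k * r))) := by
    ext r
    rw [show k * (t - r) = k * t + -(k * r) by ring, exp_add]
    ring
  rw [hsplit, integral_const_mul, integral_cpow_mul_exp_neg_mul_Ioi_of_re_pos hs hk, neg_neg]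
  refine ⟨(integrableOn_cpow_mul_exp_neg_mul (by simp; linarith) hk).const_mul _, ?_⟩
  field_simp [Gamma_ne_zero_of_re_pos hs]
end

section
/- Let α, k, t ∈ ℂ with −1 < Re(α) < 0, Re(k) ≥ 0, and k ≠ 0. Then the improper integral lim_{R→∞} (1/Γ(−α)) · ∫_0^R r^{−α−1} · e^{k(t−r)} dr exists and equals k^α · e^{kt}, where k^α is the principal branch (argument of k in (−π, π)). -/
/-!
Put `s = -α`; after factoring out `e^{kt}` it remains to show
`∫₀^R r^(s-1) e^(-kr) dr → Γ(s) k^(-s)`. For real `k > 0` this is Euler's integral for `Γ` after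
the substitution `r ↦ r / k`; both sides are holomorphic in `k` on `Re k > 0`, so the identity
theorem extends it to that half-plane. On the line `Re k = 0` the integral converges only
conditionally, but integrating by parts on `[1, R]` rewrites it as an absolutely convergent
expression that is continuous in `k` on `Re k ≥ 0, k ≠ 0`, so the identity passes to the
boundary by density.
-/

open Complex MeasureTheory Filter intervalIntegral Set Topology

lemma norm_cpow_mul_cexp_neg_mul (c k : ℂ) {r : ℝ} (hr : 0 < r) :
    ‖(r : ℂ) ^ c * cexp (-(k * r))‖ = r ^ c.re * Real.exp (-(k.re * r)) := by
  rw [norm_mul, norm_cpow_eq_rpow_re_of_pos hr, norm_exp]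
  simp [mul_re]

lemma norm_cpow_mul_cexp_neg_mul_le (c : ℂ) {k : ℂ} (hk : 0 ≤ k.re) {r : ℝ} (hr : 0 < r) :
    ‖(r : ℂ) ^ c * cexp (-(k * r))‖ ≤ r ^ c.re := by
  rw [norm_cpow_mul_cexp_neg_mul c k hr]
  exact mul_le_of_le_one_right (Real.rpow_nonneg hr.le _)
    (Real.exp_le_one_iff.2 (neg_nonpos.2 (mul_nonneg hk hr.le)))

lemma continuousOn_cpow_mul_cexp_neg_mul (c k : ℂ) :
    ContinuousOn (fun r : ℝ => (r : ℂ) ^ c * cexp (-(k * r))) (Ioi 0) :=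
  (continuous_ofReal.continuousOn.cpow continuousOn_const
    fun _ hr => ofReal_mem_slitPlane.2 hr).mul (by fun_prop)

lemma integrableOn_Ioi_rpow_mul_exp_neg_mul {c b : ℝ} (hc : -1 < c) (hb : 0 < b) :
    IntegrableOn (fun r : ℝ => r ^ c * Real.exp (-(b * r))) (Ioi 0) := by
  simpa only [Real.rpow_one, neg_mul] using
    integrableOn_rpow_mul_exp_neg_mul_rpow hc one_pos hb

section DominatedByRpow

variable {A : Set ℝ} (hA : MeasurableSet A) (hA0 : A ⊆ Ioi 0) {c : ℂ}
  (hc : IntegrableOn (fun r : ℝ => r ^ c.re) A)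
include hA hA0 hc

lemma integrableOn_cpow_mul_cexp_neg_mul {k : ℂ} (hk : 0 ≤ k.re) :
    IntegrableOn (fun r : ℝ => (r : ℂ) ^ c * cexp (-(k * r))) A :=
  hc.mono' (((continuousOn_cpow_mul_cexp_neg_mul c k).mono hA0).aestronglyMeasurable hA)
    ((ae_restrict_mem hA).mono fun _ hr => norm_cpow_mul_cexp_neg_mul_le c hk (hA0 hr))

lemma continuousOn_setIntegral_cpow_mul_cexp_neg_mul :
    ContinuousOn (fun k : ℂ => ∫ r in A, (r : ℂ) ^ c * cexp (-(k * r))) {k | 0 ≤ k.re} :=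
  continuousOn_of_dominated
    (fun k _ => ((continuousOn_cpow_mul_cexp_neg_mul c k).mono hA0).aestronglyMeasurable hA)
    (fun _ hk => (ae_restrict_mem hA).mono fun _ hr =>
      norm_cpow_mul_cexp_neg_mul_le c hk (hA0 hr))
    hc (ae_of_all _ fun _ => by fun_prop)

end DominatedByRpow

lemma integrableOn_Ioi_cpow_mul_cexp_neg_mul {c k : ℂ} (hc : -1 < c.re) (hk : 0 < k.re) :
    IntegrableOn (fun r : ℝ => (r : ℂ) ^ c * cexp (-(k * r))) (Ioi 0) :=
  (integrableOn_Ioi_rpow_mul_exp_neg_mul hc hk).mono'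
    ((continuousOn_cpow_mul_cexp_neg_mul c k).aestronglyMeasurable measurableSet_Ioi)
    ((ae_restrict_mem measurableSet_Ioi).mono fun _ hr =>
      (norm_cpow_mul_cexp_neg_mul c k hr).le)

lemma tendsto_cpow_mul_cexp_neg_mul_atTop {c k : ℂ} (hc : c.re < 0) (hk : 0 ≤ k.re) :
    Tendsto (fun R : ℝ => (R : ℂ) ^ c * cexp (-(k * R))) atTop (𝓝 0) := by
  refine squeeze_zero_norm' ?_ (by simpa using tendsto_rpow_neg_atTop (neg_pos.2 hc))
  filter_upwards [eventually_gt_atTop 0] with R hR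
  exact norm_cpow_mul_cexp_neg_mul_le c hk hR

lemma integral_cpow_mul_cexp_neg_mul_eq_by_parts (c : ℂ) {k : ℂ} (hk : k ≠ 0) {a b : ℝ}
    (ha : 0 < a) (hab : a ≤ b) :
    ∫ r in a..b, (r : ℂ) ^ c * cexp (-(k * r)) =
      ((a : ℂ) ^ c * cexp (-(k * a)) - (b : ℂ) ^ c * cexp (-(k * b))) / k
        + c / k * ∫ r in a..b, (r : ℂ) ^ (c - 1) * cexp (-(k * r)) := by
  have hpos : uIcc a b ⊆ Ioi 0 := fun x hx =>
    ha.trans_le (by rw [uIcc_of_le hab] at hx; exact hx.1)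
  have hcpow : ∀ x ∈ uIcc a b,
      HasDerivAt (fun y : ℝ => (y : ℂ) ^ c) (c * (x : ℂ) ^ (c - 1)) x := fun x hx =>
    (hasStrictDerivAt_cpow_const (ofReal_mem_slitPlane.2 (hpos hx))).hasDerivAt.comp_ofReal
  have hexp (x : ℝ) : HasDerivAt (fun y : ℝ => -cexp (-(k * y)) / k) (cexp (-(k * x))) x := by
    have h : HasDerivAt (fun z : ℂ => -(k * z)) (-k) x := by
      simpa using ((hasDerivAt_id (x : ℂ)).const_mul k).fun_neg
    convert (h.cexp.fun_neg.div_const k).comp_ofReal using 1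
    field_simp
  have hcpow' : ContinuousOn (fun x : ℝ => c * (x : ℂ) ^ (c - 1)) (uIcc a b) :=
    continuousOn_const.mul (continuous_ofReal.continuousOn.cpow continuousOn_const
      fun _ hx => ofReal_mem_slitPlane.2 (hpos hx))
  have hexp' : Continuous fun x : ℝ => cexp (-(k * x)) := by fun_prop
  rw [intervalIntegral.integral_mul_deriv_eq_deriv_mul hcpow (fun x _ => hexp x)
    hcpow'.intervalIntegrable (hexp'.intervalIntegrable _ _),
    show ∫ x in a..b, c * (x : ℂ) ^ (c - 1) * (-cexp (-(k * x)) / k)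
        = -(c / k) * ∫ x in a..b, (x : ℂ) ^ (c - 1) * cexp (-(k * x)) by
      rw [← intervalIntegral.integral_const_mul]
      congr 1 with x
      ring]
  ring

/-- Integrating by parts on `[1, ∞)` turns `∫₀^∞ r^(s-1) e^(-kr) dr`, which for `Re k = 0`
converges only as an improper integral, into a sum of absolutely convergent integrals. -/
noncomputable def gammaExpIntegral (s k : ℂ) : ℂ :=
  (∫ r in Ioc (0 : ℝ) 1, (r : ℂ) ^ (s - 1) * cexp (-(k * r))) + cexp (-k) / k
    + (s - 1) / k * ∫ r in Ioi (1 : ℝ), (r : ℂ) ^ (s - 1 - 1) * cexp (-(k * r))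

section GammaExpIntegral

variable {s : ℂ}

lemma integrableOn_Ioc_rpow_re_sub_one (hs : 0 < s.re) :
    IntegrableOn (fun r : ℝ => r ^ (s - 1).re) (Ioc 0 1) := by
  rw [← intervalIntegrable_iff_integrableOn_Ioc_of_le zero_le_one]
  exact intervalIntegral.intervalIntegrable_rpow' (by simpa using hs)

lemma integrableOn_Ioi_rpow_re_sub_one_sub_one (hs : s.re < 1) :
    IntegrableOn (fun r : ℝ => r ^ (s - 1 - 1).re) (Ioi 1) :=
  integrableOn_Ioi_rpow_of_lt (by simp; linarith) one_pos

lemma tendsto_intervalIntegral_gammaExpIntegral {k : ℂ} (hs0 : 0 < s.re) (hs1 : s.re < 1)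
    (hk : 0 ≤ k.re) (hk0 : k ≠ 0) :
    Tendsto (fun R : ℝ => ∫ r in (0 : ℝ)..R, (r : ℂ) ^ (s - 1) * cexp (-(k * r))) atTop
      (𝓝 (gammaExpIntegral s k)) := by
  have hhead := integrableOn_cpow_mul_cexp_neg_mul measurableSet_Ioc Ioc_subset_Ioi_self
    (integrableOn_Ioc_rpow_re_sub_one hs0) hk
  have htail := integrableOn_cpow_mul_cexp_neg_mul measurableSet_Ioi
    (Ioi_subset_Ioi zero_le_one) (integrableOn_Ioi_rpow_re_sub_one_sub_one hs1) hk
  have hlim : Tendsto (fun R : ℝ =>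
      (∫ r in Ioc (0 : ℝ) 1, (r : ℂ) ^ (s - 1) * cexp (-(k * r)))
      + (cexp (-k) - (R : ℂ) ^ (s - 1) * cexp (-(k * R))) / k
      + (s - 1) / k * ∫ r in (1 : ℝ)..R, (r : ℂ) ^ (s - 1 - 1) * cexp (-(k * r))) atTop
      (𝓝 (gammaExpIntegral s k)) := by
    have hboundary := tendsto_cpow_mul_cexp_neg_mul_atTop (c := s - 1) (by simpa using hs1) hk
    simpa only [sub_zero, id_eq, gammaExpIntegral] using
      (tendsto_const_nhds.add ((tendsto_const_nhds.sub hboundary).div_const k)).add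
        ((intervalIntegral_tendsto_integral_Ioi 1 htail tendsto_id).const_mul ((s - 1) / k))
  refine hlim.congr' ?_
  filter_upwards [eventually_ge_atTop 1] with R hR
  have hhead' : IntervalIntegrable (fun r : ℝ => (r : ℂ) ^ (s - 1) * cexp (-(k * r)))
      volume 0 1 :=
    (intervalIntegrable_iff_integrableOn_Ioc_of_le zero_le_one).2 hhead
  have hmid : IntervalIntegrable (fun r : ℝ => (r : ℂ) ^ (s - 1) * cexp (-(k * r)))
      volume 1 R :=
    ((continuousOn_cpow_mul_cexp_neg_mul _ k).mono fun x hx =>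
      one_pos.trans_le (by rw [uIcc_of_le hR] at hx; exact hx.1)).intervalIntegrable
  rw [← intervalIntegral.integral_add_adjacent_intervals hhead' hmid,
    intervalIntegral.integral_of_le zero_le_one,
    integral_cpow_mul_cexp_neg_mul_eq_by_parts (s - 1) hk0 one_pos hR]
  simp only [ofReal_one, one_cpow, one_mul, mul_one, add_assoc]

lemma continuousOn_gammaExpIntegral (hs0 : 0 < s.re) (hs1 : s.re < 1) :
    ContinuousOn (gammaExpIntegral s) ({k | 0 ≤ k.re} \ {0}) := by
  have hhead := continuousOn_setIntegral_cpow_mul_cexp_neg_mul measurableSet_Ioc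
    Ioc_subset_Ioi_self (integrableOn_Ioc_rpow_re_sub_one hs0)
  have htail := continuousOn_setIntegral_cpow_mul_cexp_neg_mul measurableSet_Ioi
    (Ioi_subset_Ioi zero_le_one) (integrableOn_Ioi_rpow_re_sub_one_sub_one hs1)
  have hne : ∀ k ∈ {k : ℂ | 0 ≤ k.re} \ {0}, k ≠ 0 := fun _ hk => hk.2
  have hexp : Continuous fun k : ℂ => cexp (-k) := by fun_prop
  unfold gammaExpIntegral
  exact ((hhead.mono sdiff_subset).add (hexp.continuousOn.div continuousOn_id hne)).add
    ((continuousOn_const.div continuousOn_id hne).mul (htail.mono sdiff_subset))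

end GammaExpIntegral

section HalfPlane

variable {s : ℂ}

lemma integral_Ioi_cpow_mul_cexp_neg_ofReal_mul (hs : 0 < s.re) {x : ℝ} (hx : 0 < x) :
    ∫ r in Ioi (0 : ℝ), (r : ℂ) ^ (s - 1) * cexp (-(x * r)) = Gamma s * (x : ℂ) ^ (-s) := by
  rw [integral_cpow_mul_exp_neg_mul_Ioi hs hx, mul_comm, one_div,
    inv_cpow _ _ (by rw [arg_ofReal_of_nonneg hx.le]; exact Real.pi_ne_zero.symm), cpow_neg]

lemma hasDerivAt_cpow_mul_cexp_neg_mul (s : ℂ) {r : ℝ} (hr : 0 < r) (k : ℂ) :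
    HasDerivAt (fun w : ℂ => (r : ℂ) ^ (s - 1) * cexp (-(w * r)))
      (-((r : ℂ) ^ s * cexp (-(k * r)))) k := by
  have h : HasDerivAt (fun w : ℂ => -(w * r)) (-(r : ℂ)) k := by
    simpa using ((hasDerivAt_id k).mul_const (r : ℂ)).fun_neg
  refine (h.cexp.const_mul ((r : ℂ) ^ (s - 1))).congr_deriv ?_
  have hr' : (r : ℂ) ≠ 0 := ofReal_ne_zero.2 hr.ne'
  rw [cpow_sub _ _ hr', cpow_one]
  field_simp

lemma differentiableOn_integral_Ioi_cpow_mul_cexp_neg_mul (hs : 0 < s.re) :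
    DifferentiableOn ℂ (fun k : ℂ => ∫ r in Ioi (0 : ℝ), (r : ℂ) ^ (s - 1) * cexp (-(k * r)))
      {k | 0 < k.re} := by
  intro k hk
  have hε : 0 < k.re / 2 := half_pos hk
  have hnhds : {w : ℂ | k.re / 2 < w.re} ∈ 𝓝 k :=
    (isOpen_lt continuous_const continuous_re).mem_nhds (half_lt_self hk : k.re / 2 < k.re)
  refine (hasDerivAt_integral_of_dominated_loc_of_deriv_le
    (F' := fun w r => -((r : ℂ) ^ s * cexp (-(w * r))))
    (bound := fun r : ℝ => r ^ s.re * Real.exp (-(k.re / 2 * r))) hnhds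
    (Eventually.of_forall fun w =>
      (continuousOn_cpow_mul_cexp_neg_mul _ w).aestronglyMeasurable measurableSet_Ioi)
    (integrableOn_Ioi_cpow_mul_cexp_neg_mul (by simpa using hs) hk)
    ((continuousOn_cpow_mul_cexp_neg_mul s k).neg.aestronglyMeasurable measurableSet_Ioi) ?_
    (integrableOn_Ioi_rpow_mul_exp_neg_mul (by linarith) hε)
    ?_).2.differentiableAt.differentiableWithinAt
  · filter_upwards [ae_restrict_mem measurableSet_Ioi] with r (hr : 0 < r) w (hw : _ < w.re)
    rw [norm_neg, norm_cpow_mul_cexp_neg_mul _ _ hr]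
    gcongr
  · filter_upwards [ae_restrict_mem measurableSet_Ioi] with r (hr : 0 < r) w _
    exact hasDerivAt_cpow_mul_cexp_neg_mul s hr w

lemma integral_Ioi_cpow_mul_cexp_neg_mul (hs : 0 < s.re) {k : ℂ} (hk : 0 < k.re) :
    ∫ r in Ioi (0 : ℝ), (r : ℂ) ^ (s - 1) * cexp (-(k * r)) = Gamma s * k ^ (-s) := by
  have hU : IsOpen {w : ℂ | 0 < w.re} := isOpen_lt continuous_const continuous_re
  have hf := (differentiableOn_integral_Ioi_cpow_mul_cexp_neg_mul hs).analyticOnNhd hU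
  have hg : AnalyticOnNhd ℂ (fun w : ℂ => Gamma s * w ^ (-s)) {w | 0 < w.re} :=
    DifferentiableOn.analyticOnNhd (fun w hw =>
      ((differentiableAt_id.cpow_const (Or.inl hw)).const_mul _).differentiableWithinAt) hU
  have hreal : ∃ᶠ w in 𝓝[≠] (1 : ℂ), (∫ r in Ioi (0 : ℝ), (r : ℂ) ^ (s - 1) * cexp (-(w * r)))
      = Gamma s * w ^ (-s) := by
    have hto : Tendsto ((↑) : ℝ → ℂ) (𝓝[>] 1) (𝓝[≠] 1) :=
      tendsto_nhdsWithin_of_tendsto_nhds_of_eventually_within _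
        (by simpa using continuous_ofReal.continuousWithinAt.tendsto (x := (1 : ℝ)) (s := Ioi 1))
        (eventually_nhdsWithin_of_forall fun x hx => by simpa using (mem_Ioi.1 hx).ne')
    exact hto.frequently (eventually_nhdsWithin_of_forall fun x hx =>
      integral_Ioi_cpow_mul_cexp_neg_ofReal_mul hs (one_pos.trans (mem_Ioi.1 hx))).frequently
  exact hf.eqOn_of_preconnected_of_frequently_eq hg (convex_halfSpace_re_gt 0).isPreconnected
    (by simp) hreal hk

end HalfPlane

section Evaluation

variable {s : ℂ} (hs0 : 0 < s.re) (hs1 : s.re < 1)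
include hs0 hs1

lemma gammaExpIntegral_eq_of_re_pos {k : ℂ} (hk : 0 < k.re) :
    gammaExpIntegral s k = Gamma s * k ^ (-s) :=
  tendsto_nhds_unique
    (tendsto_intervalIntegral_gammaExpIntegral hs0 hs1 hk.le (ne_zero_of_re_pos hk))
    (integral_Ioi_cpow_mul_cexp_neg_mul hs0 hk ▸ intervalIntegral_tendsto_integral_Ioi 0
      (integrableOn_Ioi_cpow_mul_cexp_neg_mul (by simpa using hs0) hk) tendsto_id)

lemma gammaExpIntegral_eq {k : ℂ} (hk : 0 ≤ k.re) (hk0 : k ≠ 0) :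
    gammaExpIntegral s k = Gamma s * k ^ (-s) := by
  refine EqOn.of_subset_closure (s := {w : ℂ | 0 < w.re})
    (fun w hw => gammaExpIntegral_eq_of_re_pos hs0 hs1 hw)
    (continuousOn_gammaExpIntegral hs0 hs1)
    (fun w hw => (continuousAt_const.mul (continuousAt_cpow_const ?_)).continuousWithinAt)
    (fun w hw => ⟨le_of_lt (α := ℝ) hw, ne_zero_of_re_pos hw⟩) (by simp) ⟨hk, hk0⟩
  exact mem_slitPlane_iff.2 (hw.1.lt_or_eq.imp id fun h => fun him => hw.2 (ext h.symm him))

theorem tendsto_intervalIntegral_cpow_mul_cexp_neg_mul {k : ℂ} (hk : 0 ≤ k.re) (hk0 : k ≠ 0) :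
    Tendsto (fun R : ℝ => ∫ r in (0 : ℝ)..R, (r : ℂ) ^ (s - 1) * cexp (-(k * r))) atTop
      (𝓝 (Gamma s * k ^ (-s))) :=
  gammaExpIntegral_eq hs0 hs1 hk hk0 ▸ tendsto_intervalIntegral_gammaExpIntegral hs0 hs1 hk hk0

end Evaluation

/-- For `−1 < Re α < 0`, `Re k ≥ 0`, `k ≠ 0`, the improper Riemann–Liouville fractional
integral of the exponential `e^{kt}` (constant of differintegration `−∞`) exists as the
limit `R → ∞` of `(1/Γ(−α)) ∫_0^R r^{−α−1} e^{k(t−r)} dr` and equals `k^α e^{kt}`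
(principal branch). -/
theorem lerch_stmt3 (α k t : ℂ) (hα1 : -1 < α.re) (hα2 : α.re < 0)
    (hk : 0 ≤ k.re) (hk0 : k ≠ 0) :
    Tendsto
      (fun R : ℝ => (1 / Complex.Gamma (-α)) *
        ∫ r in (0:ℝ)..R, (r : ℂ) ^ (-α - 1) * Complex.exp (k * (t - r)))
      atTop (nhds (k ^ α * Complex.exp (k * t))) := by
  have hs0 : 0 < (-α).re := by simpa using hα2
  have hs1 : (-α).re < 1 := by simp; linarith
  have hΓ : Gamma (-α) ≠ 0 := Gamma_ne_zero_of_re_pos hs0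
  have hfactor (R : ℝ) : ∫ r in (0 : ℝ)..R, (r : ℂ) ^ (-α - 1) * cexp (k * (t - r))
      = cexp (k * t) * ∫ r in (0 : ℝ)..R, (r : ℂ) ^ (-α - 1) * cexp (-(k * r)) := by
    rw [← intervalIntegral.integral_const_mul]
    congr 1 with r
    rw [mul_sub, sub_eq_add_neg (k * t), exp_add]
    ring
  simp_rw [hfactor]
  convert ((tendsto_intervalIntegral_cpow_mul_cexp_neg_mul hs0 hs1 hk hk0).const_mul
    (cexp (k * t))).const_mul (1 / Gamma (-α)) using 2
  rw [neg_neg]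
  field_simp
end

section
/- Let α ∈ ℂ with Re(α) < 0, let δ > 0 be real, let c ∈ ℂ and R > 0, and let f_n : ℂ → ℂ (n ≥ 0) be continuous functions. Let Ω = {t − r : t ∈ ℂ, |t − c| ≤ R, r ∈ [0, ∞)}. Assume: (i) there is d > 0 with |u| ≥ d for all u ∈ Ω; (ii) the series ∑_{n=0}^∞ f_n converges uniformly on the closed disc {t : |t − c| ≤ R}; (iii) sup_{u ∈ Ω} ( |u|^{δ − Re(α)} · |∑_{n=N+1}^∞ f_n(u)| ) → 0 as N → ∞ (in particular the series converges pointwise on Ω, with sum f); (iv) for each n and each t with |t − c| ≤ R, the function r ↦ r^{−Re(α)−1} · |f_n(t − r)| is integrable on (0, ∞). Then for each t with |t − c| ≤ R the function r ↦ r^{−α−1} · f(t − r) is integrable on (0, ∞), the series ∑_{n=0}^∞ (1/Γ(−α)) ∫_0^∞ r^{−α−1} f_n(t − r) dr converges uniformly in t on the closed disc {t : |t − c| ≤ R}, and its sum equals (1/Γ(−α)) ∫_0^∞ r^{−α−1} f(t − r) dr. -/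
open Complex MeasureTheory Filter Set Topology

/-! On the region swept by the rays `t - r` (`r ≥ 0`, `|t - c| ≤ R`) one has
`|t - r| ≥ max d (r - M)` with `M = |c| + R`, so the tail hypothesis bounds the tail of the
integrand `r ^ (-α - 1) * (F - ∑_{n<N} f n) (t - r)` by `ε * g r` with one function
`g r = r ^ (-Re α - 1) * max d (r - M) ^ (Re α - δ)`, integrable on `(0, ∞)` because it behaves
like `r ^ (-Re α - 1)` at `0` and like `r ^ (-δ - 1)` at infinity. An `ε`-multiple of a fixed
integrable function dominating the tails uniformly in `t` gives both integrability of the limit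
and uniform convergence of the integrals. -/

section DominatedTail

variable {X ι κ E : Type*} [MeasurableSpace X] {μ : Measure X} [NormedAddCommGroup E]
  {l : Filter κ} [l.NeBot] {s : Set ι} {h : κ → ι → X → E} {H : ι → X → E} {g : X → ℝ}

theorem integrable_of_dominated_tail (hg : Integrable g μ)
    (hh : ∀ N, ∀ t ∈ s, Integrable (h N t) μ) (hH : ∀ t ∈ s, AEStronglyMeasurable (H t) μ)
    (htail : ∀ ε > 0, ∀ᶠ N in l, ∀ t ∈ s, ∀ᵐ x ∂μ, ‖H t x - h N t x‖ ≤ ε * g x)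
    {t : ι} (ht : t ∈ s) : Integrable (H t) μ := by
  obtain ⟨N, hN⟩ := (htail 1 one_pos).exists
  have hdiff : Integrable (H t - h N t) μ :=
    (hg.const_mul 1).mono' ((hH t ht).sub (hh N t ht).aestronglyMeasurable) (hN t ht)
  simpa using hdiff.add (hh N t ht)

theorem tendstoUniformlyOn_integral_of_dominated_tail [NormedSpace ℝ E] (hg : Integrable g μ)
    (hh : ∀ N, ∀ t ∈ s, Integrable (h N t) μ) (hH : ∀ t ∈ s, AEStronglyMeasurable (H t) μ)
    (htail : ∀ ε > 0, ∀ᶠ N in l, ∀ t ∈ s, ∀ᵐ x ∂μ, ‖H t x - h N t x‖ ≤ ε * g x) :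
    TendstoUniformlyOn (fun N t => ∫ x, h N t x ∂μ) (fun t => ∫ x, H t x ∂μ) l s := by
  rw [Metric.tendstoUniformlyOn_iff]
  intro ε hε
  set C := ∫ x, g x ∂μ
  have hC : 0 < |C| + 1 := by positivity
  filter_upwards [htail (ε / (|C| + 1)) (div_pos hε hC)] with N hN t ht
  rw [dist_eq_norm, ← integral_sub (integrable_of_dominated_tail hg hh hH htail ht) (hh N t ht)]
  calc ‖∫ x, H t x - h N t x ∂μ‖ ≤ ∫ x, ε / (|C| + 1) * g x ∂μ :=
        norm_integral_le_of_norm_le (hg.const_mul _) (hN t ht)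
    _ = ε / (|C| + 1) * C := integral_const_mul _ _
    _ ≤ ε / (|C| + 1) * |C| := by gcongr; exact le_abs_self C
    _ < ε := by rw [div_mul_eq_mul_div, div_lt_iff₀ hC]; nlinarith

end DominatedTail

theorem integrableOn_Ioi_rpow_mul_max_rpow_neg {a b d M : ℝ} (ha : -1 < a) (hab : a + 1 < b)
    (hd : 0 < d) : IntegrableOn (fun r : ℝ => r ^ a * max d (r - M) ^ (-b)) (Ioi 0) := by
  set T := 2 * |M| + 1
  have hT : 0 < T := by positivity
  have hmeas : AEStronglyMeasurable (fun r : ℝ => r ^ a * max d (r - M) ^ (-b)) :=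
    (by fun_prop : Measurable _).aestronglyMeasurable
  have hb : -b ≤ 0 := by linarith
  rw [← Ioc_union_Ioi_eq_Ioi hT.le]
  refine IntegrableOn.union ?_ ?_
  · have hpow : IntegrableOn (fun r : ℝ => d ^ (-b) * r ^ a) (Ioc 0 T) :=
      ((intervalIntegrable_iff_integrableOn_Ioc_of_le hT.le).1
        (intervalIntegral.intervalIntegrable_rpow' ha)).const_mul _
    refine hpow.mono' hmeas.restrict ((ae_restrict_iff' measurableSet_Ioc).2 (ae_of_all _ ?_))
    intro r hr
    have hr0 : 0 ≤ r := hr.1.le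
    rw [norm_mul, Real.norm_of_nonneg (by positivity), Real.norm_of_nonneg (by positivity),
      mul_comm]
    exact mul_le_mul_of_nonneg_right
      (Real.rpow_le_rpow_of_nonpos hd (le_max_left _ _) hb) (by positivity)
  · have hpow : IntegrableOn (fun r : ℝ => 2 ^ b * r ^ (a - b)) (Ioi T) :=
      (integrableOn_Ioi_rpow_of_lt (by linarith) hT).const_mul _
    refine hpow.mono' hmeas.restrict ((ae_restrict_iff' measurableSet_Ioi).2 (ae_of_all _ ?_))
    intro r hr
    have hr0 : 0 < r := hT.trans hr
    have hhalf : r / 2 ≤ max d (r - M) := by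
      have := le_abs_self M
      exact le_max_of_le_right (by simp only [mem_Ioi, T] at hr; linarith)
    rw [norm_mul, Real.norm_of_nonneg (by positivity), Real.norm_of_nonneg (by positivity)]
    calc r ^ a * max d (r - M) ^ (-b) ≤ r ^ a * (r / 2) ^ (-b) :=
          mul_le_mul_of_nonneg_left
            (Real.rpow_le_rpow_of_nonpos (by positivity) hhalf hb) (by positivity)
      _ = 2 ^ b * r ^ (a - b) := by
          rw [Real.div_rpow hr0.le zero_le_two, Real.rpow_sub hr0, Real.rpow_neg hr0.le,
            Real.rpow_neg zero_le_two]
          field_simp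

theorem sub_le_norm_sub_ofReal {t c : ℂ} {R r : ℝ} (ht : ‖t - c‖ ≤ R) (hr : 0 ≤ r) :
    r - (‖c‖ + R) ≤ ‖t - r‖ := by
  have hnorm : ‖t‖ ≤ ‖c‖ + R := by
    linarith [norm_le_norm_add_norm_sub' t c]
  have hsub : ‖(r : ℂ)‖ - ‖t‖ ≤ ‖t - r‖ := by
    simpa only [norm_sub_rev] using norm_sub_norm_le (r : ℂ) t
  rw [Complex.norm_of_nonneg hr] at hsub
  linarith

theorem le_mul_rpow_neg_of_rpow_mul_le {x y ε m p : ℝ} (hm : 0 < m) (hmx : m ≤ x) (hp : 0 ≤ p)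
    (hy : 0 ≤ y) (h : x ^ p * y ≤ ε) : y ≤ ε * m ^ (-p) := by
  have hx : 0 < x := hm.trans_le hmx
  calc y = x ^ p * y * x ^ (-p) := by
        rw [Real.rpow_neg hx.le]; field_simp
    _ ≤ ε * x ^ (-p) := by gcongr
    _ ≤ ε * m ^ (-p) :=
        mul_le_mul_of_nonneg_left (Real.rpow_le_rpow_of_nonpos hm hmx (neg_nonpos.2 hp))
          ((mul_nonneg (by positivity) hy).trans h)

noncomputable def riemannLiouville (α : ℂ) (f : ℂ → ℂ) (t : ℂ) : ℂ :=
  1 / Gamma (-α) * ∫ r in Ioi (0 : ℝ), (r : ℂ) ^ (-α - 1) * f (t - r)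

theorem integrableOn_ofReal_cpow_mul {s : ℂ} {φ : ℝ → ℂ}
    (hφ : AEStronglyMeasurable φ (volume.restrict (Ioi 0)))
    (h : IntegrableOn (fun r : ℝ => r ^ s.re * ‖φ r‖) (Ioi 0)) :
    IntegrableOn (fun r : ℝ => (r : ℂ) ^ s * φ r) (Ioi 0) := by
  have hker : Measurable fun r : ℝ => (r : ℂ) ^ s := by fun_prop
  refine h.mono' (hker.aestronglyMeasurable.mul hφ)
    ((ae_restrict_iff' measurableSet_Ioi).2 (ae_of_all _ fun r hr => ?_))
  rw [norm_mul, norm_cpow_eq_rpow_re_of_pos hr]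

theorem riemannLiouville_finsetSum {α : ℂ} {ι : Type*} (S : Finset ι) {f : ι → ℂ → ℂ} {t : ℂ}
    (hf : ∀ n ∈ S, IntegrableOn (fun r : ℝ => (r : ℂ) ^ (-α - 1) * f n (t - r)) (Ioi 0)) :
    ∑ n ∈ S, riemannLiouville α (f n) t = riemannLiouville α (fun u => ∑ n ∈ S, f n u) t := by
  simp only [riemannLiouville, ← Finset.mul_sum, ← integral_finsetSum S hf]

theorem riemannLiouville_tendstoUniformlyOn_of_dominated_tail {α : ℂ} {f : ℕ → ℂ → ℂ}
    {F : ℂ → ℂ} {s : Set ℂ} {g : ℝ → ℝ} (hg : IntegrableOn g (Ioi 0))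
    (hf : ∀ n, Measurable (f n))
    (hint : ∀ n, ∀ t ∈ s, IntegrableOn (fun r : ℝ => (r : ℂ) ^ (-α - 1) * f n (t - r)) (Ioi 0))
    (hlim : ∀ t ∈ s, ∀ r : ℝ, 0 < r →
      Tendsto (fun N => ∑ n ∈ Finset.range N, f n (t - r)) atTop (𝓝 (F (t - r))))
    (htail : ∀ ε > 0, ∀ᶠ N in atTop, ∀ t ∈ s, ∀ r : ℝ, 0 < r →
      r ^ (-α.re - 1) * ‖F (t - r) - ∑ n ∈ Finset.range N, f n (t - r)‖ ≤ ε * g r) :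
    (∀ t ∈ s, IntegrableOn (fun r : ℝ => (r : ℂ) ^ (-α - 1) * F (t - r)) (Ioi 0)) ∧
    TendstoUniformlyOn (fun N t => ∑ n ∈ Finset.range N, riemannLiouville α (f n) t)
      (riemannLiouville α F) atTop s := by
  have hker : Measurable fun r : ℝ => (r : ℂ) ^ (-α - 1) := by fun_prop
  have hsum : ∀ N, ∀ t ∈ s, IntegrableOn
      (fun r : ℝ => (r : ℂ) ^ (-α - 1) * ∑ n ∈ Finset.range N, f n (t - r)) (Ioi 0) := by
    intro N t ht
    simp only [Finset.mul_sum]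
    exact integrable_finsetSum _ fun n _ => hint n t ht
  have hF : ∀ t ∈ s, AEStronglyMeasurable (fun r : ℝ => (r : ℂ) ^ (-α - 1) * F (t - r))
      (volume.restrict (Ioi 0)) := fun t ht =>
    hker.aestronglyMeasurable.mul <| aestronglyMeasurable_of_tendsto_ae atTop
      (fun N => (by fun_prop : Measurable _).aestronglyMeasurable)
      ((ae_restrict_iff' measurableSet_Ioi).2 (ae_of_all _ (hlim t ht)))
  have hdom : ∀ ε > 0, ∀ᶠ N in atTop, ∀ t ∈ s, ∀ᵐ r : ℝ ∂(volume.restrict (Ioi 0)),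
      ‖(r : ℂ) ^ (-α - 1) * F (t - r) -
        (r : ℂ) ^ (-α - 1) * ∑ n ∈ Finset.range N, f n (t - r)‖ ≤ ε * g r := by
    intro ε hε
    filter_upwards [htail ε hε] with N hN t ht
    refine (ae_restrict_iff' measurableSet_Ioi).2 (ae_of_all _ fun r hr => ?_)
    rw [← mul_sub, norm_mul, norm_cpow_eq_rpow_re_of_pos hr]
    simpa using hN t ht r hr
  refine ⟨fun t ht => integrable_of_dominated_tail hg hsum hF hdom ht, ?_⟩
  have hconv := tendstoUniformlyOn_integral_of_dominated_tail hg hsum hF hdom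
  refine ((uniformContinuous_mul_left' (1 / Gamma (-α))).comp_tendstoUniformlyOn hconv).congr ?_
  filter_upwards with N t ht
  exact (riemannLiouville_finsetSum _ fun n _ => hint n t ht).symm

theorem lerch_stmt5_general (α : ℂ) (hα : α.re < 0) (δ : ℝ) (hδ : 0 < δ)
    (c : ℂ) (R : ℝ)
    (f : ℕ → ℂ → ℂ) (hf : ∀ n, Continuous (f n)) (F : ℂ → ℂ)
    (Ω : Set ℂ)
    (hΩ : Ω = {z : ℂ | ∃ t : ℂ, ∃ r : ℝ, ‖t - c‖ ≤ R ∧ 0 ≤ r ∧ z = t - r})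
    (hd : ∃ d > 0, ∀ u ∈ Ω, d ≤ ‖u‖)
    (hptwise : ∀ u ∈ Ω, Tendsto (fun N => ∑ n ∈ Finset.range N, f n u) atTop (nhds (F u)))
    (htail : ∀ ε > 0, ∃ N₀ : ℕ, ∀ N ≥ N₀, ∀ u ∈ Ω,
      ‖u‖ ^ (δ - α.re) * ‖F u - ∑ n ∈ Finset.range N, f n u‖ ≤ ε)
    (hint : ∀ n : ℕ, ∀ t : ℂ, ‖t - c‖ ≤ R →
      IntegrableOn (fun r : ℝ => r ^ (-α.re - 1) * ‖f n (t - r)‖) (Set.Ioi 0)) :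
    (∀ t : ℂ, ‖t - c‖ ≤ R →
      IntegrableOn (fun r : ℝ => (r : ℂ) ^ (-α - 1) * F (t - r)) (Set.Ioi 0)) ∧
    TendstoUniformlyOn
      (fun N t => ∑ n ∈ Finset.range N,
        (1 / Complex.Gamma (-α)) * ∫ r in Set.Ioi (0:ℝ), (r : ℂ) ^ (-α - 1) * f n (t - r))
      (fun t => (1 / Complex.Gamma (-α)) *
        ∫ r in Set.Ioi (0:ℝ), (r : ℂ) ^ (-α - 1) * F (t - r))
      atTop {t : ℂ | ‖t - c‖ ≤ R} := by
  obtain ⟨d, hd0, hdΩ⟩ := hd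
  have hmem : ∀ t : ℂ, ‖t - c‖ ≤ R → ∀ r : ℝ, 0 ≤ r → t - r ∈ Ω :=
    fun t ht r hr => hΩ ▸ ⟨t, r, ht, hr, rfl⟩
  have hray : ∀ t : ℂ, ‖t - c‖ ≤ R → ∀ r : ℝ, 0 ≤ r → max d (r - (‖c‖ + R)) ≤ ‖t - r‖ :=
    fun t ht r hr => max_le (hdΩ _ (hmem t ht r hr)) (sub_le_norm_sub_ofReal ht hr)
  set g : ℝ → ℝ := fun r => r ^ (-α.re - 1) * max d (r - (‖c‖ + R)) ^ (-(δ - α.re))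
  have hg : IntegrableOn g (Ioi 0) :=
    integrableOn_Ioi_rpow_mul_max_rpow_neg (by linarith) (by linarith) hd0
  refine riemannLiouville_tendstoUniformlyOn_of_dominated_tail hg (fun n => (hf n).measurable)
    (fun n t ht => integrableOn_ofReal_cpow_mul (by fun_prop) (by simpa using hint n t ht))
    (fun t ht r hr => hptwise _ (hmem t ht r hr.le)) fun ε hε => ?_
  obtain ⟨N₀, hN₀⟩ := htail ε hε
  filter_upwards [eventually_ge_atTop N₀] with N hN t ht r hr
  have hbound := le_mul_rpow_neg_of_rpow_mul_le (lt_max_of_lt_left hd0) (hray t ht r hr.le)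
    (by linarith) (norm_nonneg _) (hN₀ N hN _ (hmem t ht r hr.le))
  calc r ^ (-α.re - 1) * ‖F (t - r) - ∑ n ∈ Finset.range N, f n (t - r)‖
      ≤ r ^ (-α.re - 1) * (ε * max d (r - (‖c‖ + R)) ^ (-(δ - α.re))) := by gcongr
    _ = ε * g r := by ring

/-- Term-by-term Riemann–Liouville fractional integration (order `α`, `Re α < 0`,
constant of differintegration `−∞`) of a uniformly convergent series: under the decay
hypothesis on the tails over the region `Ω` swept by the leftward horizontal rays from
the disc `|t − c| ≤ R`, the fractional integral of the sum `F` exists, the series of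
fractional integrals converges uniformly on the disc, and its sum is the fractional
integral of `F`. -/
theorem lerch_stmt5 (α : ℂ) (hα : α.re < 0) (δ : ℝ) (hδ : 0 < δ)
    (c : ℂ) (R : ℝ) (hR : 0 < R)
    (f : ℕ → ℂ → ℂ) (hf : ∀ n, Continuous (f n)) (F : ℂ → ℂ)
    (Ω : Set ℂ)
    (hΩ : Ω = {z : ℂ | ∃ t : ℂ, ∃ r : ℝ, ‖t - c‖ ≤ R ∧ 0 ≤ r ∧ z = t - r})
    (hd : ∃ d > 0, ∀ u ∈ Ω, d ≤ ‖u‖)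
    (hunif : TendstoUniformlyOn (fun N t => ∑ n ∈ Finset.range N, f n t) F atTop
      {t : ℂ | ‖t - c‖ ≤ R})
    (hptwise : ∀ u ∈ Ω, Tendsto (fun N => ∑ n ∈ Finset.range N, f n u) atTop (nhds (F u)))
    (htail : ∀ ε > 0, ∃ N₀ : ℕ, ∀ N ≥ N₀, ∀ u ∈ Ω,
      ‖u‖ ^ (δ - α.re) * ‖F u - ∑ n ∈ Finset.range N, f n u‖ ≤ ε)
    (hint : ∀ n : ℕ, ∀ t : ℂ, ‖t - c‖ ≤ R →
      IntegrableOn (fun r : ℝ => r ^ (-α.re - 1) * ‖f n (t - r)‖) (Set.Ioi 0)) :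
    (∀ t : ℂ, ‖t - c‖ ≤ R →
      IntegrableOn (fun r : ℝ => (r : ℂ) ^ (-α - 1) * F (t - r)) (Set.Ioi 0)) ∧
    TendstoUniformlyOn
      (fun N t => ∑ n ∈ Finset.range N,
        (1 / Complex.Gamma (-α)) * ∫ r in Set.Ioi (0:ℝ), (r : ℂ) ^ (-α - 1) * f n (t - r))
      (fun t => (1 / Complex.Gamma (-α)) *
        ∫ r in Set.Ioi (0:ℝ), (r : ℂ) ^ (-α - 1) * F (t - r))
      atTop {t : ℂ | ‖t - c‖ ≤ R} :=
  lerch_stmt5_general α hα δ hδ c R f hf F Ω hΩ hd hptwise htail hint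
end
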